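/- arXiv:2203.11820 — 2 statements merged into one kernel-verified Lean document; each statement's English description precedes it below -/
import Mathlib

section
/- First-order expansion of the iOLS error term for large δ: For all real u ≥ 0 and δ > 0, |log(δ + u) − log(1 + δ) − (u − 1)/(1 + δ)| ≤ (u − 1)²/(2·δ·(1 + δ)). -/
/-!
Put `x = (δ + u)/(1 + δ)`, so the quantity to bound is `|log x - (x - 1)|` and `x ≥ δ/(1 + δ)`.
By `log x ≤ x - 1` this is `x - 1 - log x`, which is at most `(x - 1)²/2` for `x ≥ 1` (from
`log (1 + t) ≥ 2t/(t + 2)`) and at most `(x - 1)²/(2x)` for `x ≤ 1` (from `sinh (log x) ≤ log x`).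
Both are at most `(x - 1)²(1 + δ)/(2δ)`, which is the claimed bound.
-/

open Real

namespace Real

lemma sub_one_sub_log_le_of_one_le {x : ℝ} (hx : 1 ≤ x) : x - 1 - log x ≤ (x - 1) ^ 2 / 2 := by
  have hlog := le_log_one_add_of_nonneg (sub_nonneg.2 hx)
  rw [add_sub_cancel] at hlog
  have hrat : x - 1 - (x - 1) ^ 2 / 2 ≤ 2 * (x - 1) / (x - 1 + 2) := by
    rw [le_div_iff₀ (by linarith)]
    nlinarith [sq_nonneg (x - 1), sub_nonneg.2 hx]
  linarith

lemma sub_one_sub_log_le_of_le_one {x : ℝ} (hx₀ : 0 < x) (hx₁ : x ≤ 1) :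
    x - 1 - log x ≤ (x - 1) ^ 2 / (2 * x) := by
  have hlog : (x - x⁻¹) / 2 ≤ log x := by
    rw [← sinh_log hx₀, sinh_le_self_iff]
    exact log_nonpos hx₀.le hx₁
  have hrat : (x - 1) ^ 2 / (2 * x) = x - 1 - (x - x⁻¹) / 2 := by
    field_simp
    ring
  linarith

lemma abs_log_sub_sub_one_le {x m : ℝ} (hm₀ : 0 < m) (hm₁ : m ≤ 1) (hmx : m ≤ x) :
    |log x - (x - 1)| ≤ (x - 1) ^ 2 / (2 * m) := by
  have hx₀ : 0 < x := hm₀.trans_le hmx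
  rw [abs_sub_comm, abs_of_nonneg (sub_nonneg.2 (log_le_sub_one_of_pos hx₀))]
  rcases le_total 1 x with hx₁ | hx₁
  · calc x - 1 - log x ≤ (x - 1) ^ 2 / 2 := sub_one_sub_log_le_of_one_le hx₁
      _ = (x - 1) ^ 2 / (2 * 1) := by rw [mul_one]
      _ ≤ (x - 1) ^ 2 / (2 * m) := by gcongr
  · calc x - 1 - log x ≤ (x - 1) ^ 2 / (2 * x) := sub_one_sub_log_le_of_le_one hx₀ hx₁
      _ ≤ (x - 1) ^ 2 / (2 * m) := by gcongr

end Real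

/-- First-order expansion of the iOLS error term for large `δ`. -/
theorem iOLS_error_first_order_bound (u δ : ℝ) (hu : 0 ≤ u) (hδ : 0 < δ) :
    |Real.log (δ + u) - Real.log (1 + δ) - (u - 1) / (1 + δ)| ≤
      (u - 1) ^ 2 / (2 * δ * (1 + δ)) := by
  have h1δ : 0 < 1 + δ := by linarith
  have hm₁ : δ / (1 + δ) ≤ 1 := (div_le_one h1δ).2 (by linarith)
  have hmx : δ / (1 + δ) ≤ (δ + u) / (1 + δ) := by gcongr; linarith
  calc |log (δ + u) - log (1 + δ) - (u - 1) / (1 + δ)|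
      = |log ((δ + u) / (1 + δ)) - ((δ + u) / (1 + δ) - 1)| := by
        rw [log_div (by linarith) h1δ.ne']
        congr 2
        field_simp
        ring
    _ ≤ ((δ + u) / (1 + δ) - 1) ^ 2 / (2 * (δ / (1 + δ))) :=
        abs_log_sub_sub_one_le (by positivity) hm₁ hmx
    _ = (u - 1) ^ 2 / (2 * δ * (1 + δ)) := by
        field_simp
        ring
end

section
/- Pointwise convergence of the iOLS_δ objective to the multiplicative-Poisson objective as δ → ∞: Fix real numbers y ≥ 0 and t. Then the limit as δ → ∞ of (1 + δ)·(log(y + δ·exp(t)) − log(1 + δ) − t) equals y·exp(−t) − 1. -/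
open Filter Real

/-! With `c = y·exp(-t) - 1`, the bracket equals `log (1 + c/(1+δ))` once `δ` is large, and
`x · log (1 + c/x) → c` as `x → ∞`. -/

theorem log_add_mul_exp_sub_log_one_add_sub_eq (y t δ : ℝ) (hδ : 0 < 1 + δ)
    (hy : 0 < y + δ * exp t) :
    log (y + δ * exp t) - log (1 + δ) - t = log (1 + (y * exp (-t) - 1) / (1 + δ)) := by
  have hquot : 1 + (y * exp (-t) - 1) / (1 + δ) = (y + δ * exp t) * exp (-t) / (1 + δ) := by
    rw [exp_neg]
    field_simp
    ring
  rw [hquot, log_div (by positivity) hδ.ne', log_mul hy.ne' (exp_ne_zero _), log_exp]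
  ring

theorem iOLS_residual_tendsto_poisson_general (y t : ℝ) :
    Tendsto
      (fun δ : ℝ =>
        (1 + δ) * (Real.log (y + δ * Real.exp t) - Real.log (1 + δ) - t))
      atTop (nhds (y * Real.exp (-t) - 1)) := by
  have hshift : Tendsto (fun δ : ℝ => 1 + δ) atTop atTop :=
    tendsto_atTop_add_const_left _ 1 tendsto_id
  have hlin : Tendsto (fun δ : ℝ => y + δ * exp t) atTop atTop :=
    tendsto_atTop_add_const_left _ y (tendsto_id.atTop_mul_const (exp_pos t))
  refine ((tendsto_mul_log_one_add_div_atTop (y * exp (-t) - 1)).comp hshift).congr' ?_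
  filter_upwards [hshift.eventually_gt_atTop 0, hlin.eventually_gt_atTop 0] with δ hδ hy
  simp only [Function.comp_apply, log_add_mul_exp_sub_log_one_add_sub_eq y t δ hδ hy]

/-- Pointwise convergence of the rescaled iOLS_δ residual to the
multiplicative-Poisson residual as `δ → ∞`. -/
theorem iOLS_residual_tendsto_poisson (y t : ℝ) (hy : 0 ≤ y) :
    Tendsto
      (fun δ : ℝ =>
        (1 + δ) * (Real.log (y + δ * Real.exp t) - Real.log (1 + δ) - t))
      atTop (nhds (y * Real.exp (-t) - 1)) :=
  iOLS_residual_tendsto_poisson_general y t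
end
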